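/- Fix reals 0 < R₁ < R₂ < R, α > 0, P_T > 0, 𝒩 > 0, γ > 0 and reflection coefficients 0 < ξ₂ ≤ ξ₁ ≤ 1; set κ = ξ₂/ξ₁. Let r₁ on [R₁, R₂] with density 2r/(R₂² − R₁²) and r₂ on [R₂, R] with density 2r/(R² − R₂²) be independent random variables, and let p₂ = P( P_T·ξ₁·r₁^{−2α}/(P_T·ξ₂·r₂^{−2α} + 𝒩) ≥ γ and P_T·ξ₂·r₂^{−2α}/𝒩 ≥ γ ). If γ < P_T·ξ₂·R₂^{−2α}/𝒩 and γ ≤ R₂^{−2α} / (κ·R₂^{−2α} + 𝒩/(ξ₁·P_T)), then p₂ = ( (max{R^{−2α}, 𝒩·γ/(ξ₂·P_T)})^{−1/α} − R₂² ) / (R² − R₂²). -/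

import Mathlib

/-!
On the rectangle `[R₁, R₂] × [R₂, R]` the near node's SINR is smallest at the corner
`r₁ = r₂ = R₂`, where the second hypothesis makes it at least `γ`; so only the far node's SNR
condition matters, and it is the radial cutoff `r₂ ≤ ρ` with `ρ = (𝒩γ/(ξ₂P_T))^{-1/(2α)}`, which
the first hypothesis puts beyond `R₂`. Hence `p₂` is the probability `(m² - R₂²)/(R² - R₂²)` that
`r₂ ≤ m := min R ρ`, and `m²` is the `max` in the formula raised to the power `-1/α`.
-/

open MeasureTheory Set

lemma integral_two_mul_div (a b D : ℝ) : ∫ x in a..b, 2 * x / D = (b ^ 2 - a ^ 2) / D := by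
  rw [intervalIntegral.integral_div, intervalIntegral.integral_const_mul, integral_id]
  ring

lemma integral_integral_ite_of_iff_le (a b c d m : ℝ) (P : ℝ → ℝ → Prop)
    [∀ x y, Decidable (P x y)] (hab : b ^ 2 - a ^ 2 ≠ 0) (hm : m ∈ Icc c d)
    (hP : ∀ x ∈ uIcc a b, ∀ y ∈ Icc c d, P x y ↔ y ≤ m) :
    (∫ x in a..b, ∫ y in c..d,
        if P x y then 2 * x / (b ^ 2 - a ^ 2) * (2 * y / (d ^ 2 - c ^ 2)) else 0) =
      (m ^ 2 - c ^ 2) / (d ^ 2 - c ^ 2) := by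
  have hcd : c ≤ d := hm.1.trans hm.2
  have inner : EqOn (fun x => ∫ y in c..d,
        if P x y then 2 * x / (b ^ 2 - a ^ 2) * (2 * y / (d ^ 2 - c ^ 2)) else 0)
      (fun x => 2 * x / (b ^ 2 - a ^ 2) * ((m ^ 2 - c ^ 2) / (d ^ 2 - c ^ 2))) (uIcc a b) := by
    intro x hx
    have hcut : EqOn
        (fun y => if P x y then 2 * x / (b ^ 2 - a ^ 2) * (2 * y / (d ^ 2 - c ^ 2)) else 0)
        ({y | y ≤ m}.indicator fun y => 2 * x / (b ^ 2 - a ^ 2) * (2 * y / (d ^ 2 - c ^ 2)))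
        (uIcc c d) := by
      intro y hy
      rw [uIcc_of_le hcd] at hy
      simp only [indicator_apply, mem_ofPred_eq, hP x hx y hy]
    simp only
    rw [intervalIntegral.integral_congr hcut, intervalIntegral.integral_indicator hm,
      intervalIntegral.integral_const_mul, integral_two_mul_div]
  rw [intervalIntegral.integral_congr inner, intervalIntegral.integral_mul_const,
    integral_two_mul_div, div_self hab, one_mul]

noncomputable def snrRadius (PT ξ Noise γ α : ℝ) : ℝ := (Noise * γ / (ξ * PT)) ^ (-(2 * α))⁻¹

section Model

variable {PT ξ Noise γ α : ℝ}

lemma le_snr_iff_le_snrRadius (hPT : 0 < PT) (hξ : 0 < ξ) (hNoise : 0 < Noise) (hγ : 0 < γ)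
    (hα : 0 < α) {r : ℝ} (hr : 0 < r) :
    γ ≤ PT * ξ * r ^ (-(2 * α)) / Noise ↔ r ≤ snrRadius PT ξ Noise γ α := by
  rw [snrRadius, Real.le_rpow_inv_iff_of_neg hr (by positivity) (by linarith), le_div_iff₀ hNoise,
    div_le_iff₀ (by positivity)]
  constructor <;> intro h <;> linarith

lemma max_rpow_rpow_eq_min_snrRadius_sq (hPT : 0 < PT) (hξ : 0 < ξ) (hNoise : 0 < Noise)
    (hγ : 0 < γ) (hα : 0 < α) {R : ℝ} (hR : 0 < R) :
    (max (R ^ (-(2 * α))) (Noise * γ / (ξ * PT))) ^ (-(1 / α)) =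
      min R (snrRadius PT ξ Noise γ α) ^ 2 := by
  have he : -(2 * α) < 0 := by linarith
  have hρ : 0 < snrRadius PT ξ Noise γ α := Real.rpow_pos_of_pos (by positivity) _
  have hρe : snrRadius PT ξ Noise γ α ^ (-(2 * α)) = Noise * γ / (ξ * PT) :=
    Real.rpow_inv_rpow (by positivity) he.ne
  rw [← hρe, ← (Real.antitoneOn_rpow_Ioi_of_exponent_nonpos he.le).map_min hR hρ,
    ← Real.rpow_mul (lt_min hR hρ).le, ← Real.rpow_natCast]
  congr 1
  field_simp
  norm_num

lemma sinr_corner_le {ξ₁ : ℝ} (hPT : 0 < PT) (hξ₁ : 0 < ξ₁) (hξ : 0 < ξ) (hNoise : 0 < Noise)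
    (hα : 0 < α) {r₁ s r₂ : ℝ} (hr₁ : 0 < r₁) (h₁ : r₁ ≤ s) (h₂ : s ≤ r₂) :
    PT * ξ₁ * s ^ (-(2 * α)) / (PT * ξ * s ^ (-(2 * α)) + Noise) ≤
      PT * ξ₁ * r₁ ^ (-(2 * α)) / (PT * ξ * r₂ ^ (-(2 * α)) + Noise) := by
  have he : -(2 * α) ≤ 0 := by linarith
  have hs : 0 < s := hr₁.trans_le h₁
  have := Real.rpow_pos_of_pos (hs.trans_le h₂) (-(2 * α))
  gcongr PT * ξ₁ * ?_ / (PT * ξ * ?_ + Noise)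
  · exact Real.rpow_le_rpow_of_nonpos hr₁ h₁ he
  · exact Real.rpow_le_rpow_of_nonpos hs h₂ he

end Model

theorem backcom_p2_second_case_formula
    (R₁ R₂ R α PT Noise γ ξ₁ ξ₂ κ : ℝ)
    (h0 : 0 < R₁) (h12 : R₁ < R₂) (h2R : R₂ < R)
    (hα : 0 < α) (hPT : 0 < PT) (hNoise : 0 < Noise) (hγ : 0 < γ)
    (hξ2 : 0 < ξ₂) (hξ21 : ξ₂ ≤ ξ₁)
    (hκ : κ = ξ₂ / ξ₁)
    (hcond1 : γ < PT * ξ₂ * R₂ ^ (-(2 * α)) / Noise)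
    (hcond2 : γ ≤ R₂ ^ (-(2 * α)) / (κ * R₂ ^ (-(2 * α)) + Noise / (ξ₁ * PT))) :
    (∫ r₁ in R₁..R₂, ∫ r₂ in R₂..R,
        if γ ≤ PT * ξ₁ * r₁ ^ (-(2 * α)) / (PT * ξ₂ * r₂ ^ (-(2 * α)) + Noise) ∧
            γ ≤ PT * ξ₂ * r₂ ^ (-(2 * α)) / Noise
        then 2 * r₁ / (R₂ ^ 2 - R₁ ^ 2) * (2 * r₂ / (R ^ 2 - R₂ ^ 2)) else 0) =
      ((max (R ^ (-(2 * α))) (Noise * γ / (ξ₂ * PT))) ^ (-(1 / α)) - R₂ ^ 2) /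
        (R ^ 2 - R₂ ^ 2) := by
  have hξ1 : 0 < ξ₁ := hξ2.trans_le hξ21
  have hR₂ : 0 < R₂ := h0.trans h12
  have hR₂ρ : R₂ ≤ snrRadius PT ξ₂ Noise γ α :=
    (le_snr_iff_le_snrRadius hPT hξ2 hNoise hγ hα hR₂).1 hcond1.le
  have hcorner : γ ≤ PT * ξ₁ * R₂ ^ (-(2 * α)) / (PT * ξ₂ * R₂ ^ (-(2 * α)) + Noise) := by
    convert hcond2 using 1
    rw [hκ]
    field_simp
  rw [max_rpow_rpow_eq_min_snrRadius_sq hPT hξ2 hNoise hγ hα (hR₂.trans h2R)]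
  refine integral_integral_ite_of_iff_le _ _ _ _ _ _ (by nlinarith)
    ⟨le_min h2R.le hR₂ρ, min_le_left _ _⟩ fun r₁ hr₁ r₂ hr₂ => ?_
  rw [uIcc_of_le h12.le] at hr₁
  rw [le_min_iff, ← le_snr_iff_le_snrRadius hPT hξ2 hNoise hγ hα (hR₂.trans_le hr₂.1)]
  exact ⟨fun h => ⟨hr₂.2, h.2⟩, fun h =>
    ⟨hcorner.trans (sinr_corner_le hPT hξ1 hξ2 hNoise hα (h0.trans_le hr₁.1) hr₁.2 hr₂.1), h.2⟩⟩
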